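/- For all m ≥ 0 and all x, y ∈ CC_m: ∂_i(x ⋆ y) = ∂_i(x) ⋆ ∂_i(y) for every 0 ≤ i ≤ m, and σ_j(x ⋆ y) = σ_j(x) ⋆ σ_j(y) for every 0 ≤ j ≤ m. Moreover the unit elements are compatible with the simplicial structure: ∂_i(1_m) = 1_{m−1} for m ≥ 1 and 0 ≤ i ≤ m, and σ_j(1_m) = 1_{m+1} for 0 ≤ j ≤ m. -/

import Mathlib

/-!
Both sides of each identity are `k`-linear in each argument and the pure tensors
`φ ⊗ a₁ ⊗ ⋯ ⊗ aₘ ⊗ v` span `CC_m`, so it suffices to compare them on pure tensors. There a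
face or degeneracy map only reindexes, composes two adjacent morphisms or inserts an identity,
and moves a boundary slot along `ω(a)`, while `⋆` acts slot by slot; the identities reduce to
the interchange law `(a ⊠ a') ∘ (b ⊠ b') = (a ∘ b) ⊠ (a' ∘ b')`, `id ⊠ id = id`, and the
naturality of `μ` and `μ⁻¹`. The index tuples of the two sides agree only propositionally
(an `if` of tensor products against a tensor product of `if`s), so pure tensors are compared
after transport along that equality (`mk_eq_mk`). The unit `1_m` involves only `𝟙` and
`id_𝟙`, which every simplicial operator preserves.
-/

open CategoryTheory TensorProduct MonoidalCategory

noncomputable section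

namespace Tannaka

variable {k : Type} [Field k] {A : Type} [SmallCategory A] [DecidableEq A]
  [Preadditive A] [CategoryTheory.Linear k A]
  [MonoidalCategory A] [MonoidalPreadditive A] [MonoidalLinear k A]
variable (ω : A ⥤ ModuleCat k) [ω.Additive] [Functor.Linear k ω] [ω.Monoidal]

/-- The chain `Hom(X₁,X₀) ⊗ Hom(X₂,X₁) ⊗ ⋯ ⊗ Hom(Xₙ,Xₙ₋₁)` of a tuple of
objects, as a tensor product over `k` of the `Hom`-spaces. -/
abbrev Chain (n : ℕ) (X : Fin (n+1) → A) : Type :=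
  ⨂[k] (i : Fin n), (X ⟨i.1+1, Nat.succ_lt_succ i.2⟩ ⟶ X ⟨i.1, Nat.lt_succ_of_lt i.2⟩)

/-- The summand `ω(X₀)^∨ ⊗ Hom(X₁,X₀) ⊗ ⋯ ⊗ Hom(Xₙ,Xₙ₋₁) ⊗ ω(Xₙ)` of the
Hochschild module, indexed by a tuple of objects. -/
abbrev Summand (n : ℕ) (X : Fin (n+1) → A) : Type :=
  Module.Dual k (ω.obj (X ⟨0, Nat.succ_pos n⟩)) ⊗[k]
    ((Chain (k := k) n X) ⊗[k] (ω.obj (X ⟨n, Nat.lt_succ_self n⟩)))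

/-- `CC ω n = CC_n(𝒜, ω^∨⊗ω)`, the `n`-th term of the Hochschild simplicial
vector space: the direct sum over all `(n+1)`-tuples of objects of the
corresponding summands. -/
abbrev CC (n : ℕ) : Type := DirectSum (Fin (n+1) → A) (Summand ω n)

/-- The pure tensor `φ ⊗ a₁ ⊗ ⋯ ⊗ aₙ ⊗ v` in `CC ω n`. -/
def mk (n : ℕ) (X : Fin (n+1) → A) (φ : Module.Dual k (ω.obj (X ⟨0, Nat.succ_pos n⟩)))
    (a : ∀ i : Fin n, X ⟨i.1+1, Nat.succ_lt_succ i.2⟩ ⟶ X ⟨i.1, Nat.lt_succ_of_lt i.2⟩)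
    (v : ω.obj (X ⟨n, Nat.lt_succ_self n⟩)) : CC ω n :=
  DirectSum.lof k _ (Summand ω n) X (φ ⊗ₜ ((PiTensorProduct.tprod k a) ⊗ₜ v))

/-- Transport of a morphism along equalities of its source and target. -/
def castHom {X Y X' Y' : A} (h1 : X = X') (h2 : Y = Y') (f : X ⟶ Y) : X' ⟶ Y' :=
  eqToHom h1.symm ≫ f ≫ eqToHom h2

/-- `face n i : CC ω (n+1) →ₗ CC ω n` (for `i : Fin (n+2)`) is the family of
Hochschild face maps `∂ᵢ` precisely when it satisfies the following three
defining formulas on pure tensors: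
`∂₀(φ⊗a₁⊗⋯⊗aₙ⊗v) = (φ∘ω(a₁))⊗a₂⊗⋯⊗aₙ⊗v`,
`∂ᵢ(φ⊗a₁⊗⋯⊗aₙ⊗v) = φ⊗a₁⊗⋯⊗(aᵢ∘aᵢ₊₁)⊗⋯⊗aₙ⊗v` for `0 < i < n`, and
`∂ₙ(φ⊗a₁⊗⋯⊗aₙ⊗v) = φ⊗a₁⊗⋯⊗aₙ₋₁⊗ω(aₙ)(v)`.  (Pure tensors span, so these
formulas determine the maps uniquely.) -/
def IsFace (face : ∀ n : ℕ, Fin (n+2) → (CC ω (n+1) →ₗ[k] CC ω n)) : Prop :=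
  (∀ (n : ℕ) (X : Fin (n+2) → A) (φ : Module.Dual k (ω.obj (X ⟨0, Nat.succ_pos (n+1)⟩)))
    (a : ∀ i : Fin (n+1), X ⟨i.1+1, Nat.succ_lt_succ i.2⟩ ⟶ X ⟨i.1, Nat.lt_succ_of_lt i.2⟩)
    (v : ω.obj (X ⟨n+1, Nat.lt_succ_self (n+1)⟩)),
    face n ⟨0, Nat.succ_pos (n+1)⟩ (mk ω (n+1) X φ a v) =
      mk ω n (fun j => X ⟨j.1+1, Nat.succ_lt_succ j.2⟩)
        (φ ∘ₗ ModuleCat.Hom.hom (ω.map (a ⟨0, Nat.succ_pos n⟩)))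
        (fun j => a ⟨j.1+1, Nat.succ_lt_succ j.2⟩) v) ∧
  (∀ (n : ℕ) (p : Fin n) (X : Fin (n+2) → A)
    (φ : Module.Dual k (ω.obj (X ⟨0, Nat.succ_pos (n+1)⟩)))
    (a : ∀ i : Fin (n+1), X ⟨i.1+1, Nat.succ_lt_succ i.2⟩ ⟶ X ⟨i.1, Nat.lt_succ_of_lt i.2⟩)
    (v : ω.obj (X ⟨n+1, Nat.lt_succ_self (n+1)⟩)),
    face n ⟨p.1+1, Nat.succ_lt_succ (Nat.lt_succ_of_lt p.2)⟩ (mk ω (n+1) X φ a v) =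
      mk ω n
        (fun l => if l.1 ≤ p.1 then X ⟨l.1, Nat.lt_succ_of_lt l.2⟩
          else X ⟨l.1+1, Nat.succ_lt_succ l.2⟩)
        (φ ∘ₗ ModuleCat.Hom.hom (ω.map (eqToHom (by dsimp only; rw [if_pos (Nat.zero_le p.1)]))))
        (fun j =>
          if h : j.1 < p.1 then
            castHom (by dsimp only; rw [if_pos (by omega : j.1+1 ≤ p.1)])
              (by dsimp only; rw [if_pos (by omega : j.1 ≤ p.1)])
              (a ⟨j.1, Nat.lt_succ_of_lt j.2⟩)
          else if h2 : j.1 = p.1 then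
            castHom (by dsimp only; rw [if_neg (by omega : ¬ (j.1+1 ≤ p.1))]
                        exact congrArg X (Fin.ext (by dsimp only; omega)))
              (by dsimp only; rw [if_pos (by omega : j.1 ≤ p.1)]
                  exact congrArg X (Fin.ext (by dsimp only; omega)))
              ((a ⟨p.1+1, Nat.succ_lt_succ p.2⟩) ≫ (a ⟨p.1, Nat.lt_succ_of_lt p.2⟩))
          else
            castHom (by dsimp only; rw [if_neg (by omega : ¬ (j.1+1 ≤ p.1))])
              (by dsimp only; rw [if_neg (by omega : ¬ (j.1 ≤ p.1))])
              (a ⟨j.1+1, Nat.succ_lt_succ j.2⟩))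
        ((ω.map (eqToHom (by dsimp only; rw [if_neg (by have := p.2; omega : ¬ (n ≤ p.1))] :
          X ⟨n+1, Nat.lt_succ_self (n+1)⟩ =
          (fun l : Fin (n+1) => if l.1 ≤ p.1 then X ⟨l.1, Nat.lt_succ_of_lt l.2⟩
            else X ⟨l.1+1, Nat.succ_lt_succ l.2⟩) ⟨n, Nat.lt_succ_self n⟩))) v)) ∧
  (∀ (n : ℕ) (X : Fin (n+2) → A) (φ : Module.Dual k (ω.obj (X ⟨0, Nat.succ_pos (n+1)⟩)))
    (a : ∀ i : Fin (n+1), X ⟨i.1+1, Nat.succ_lt_succ i.2⟩ ⟶ X ⟨i.1, Nat.lt_succ_of_lt i.2⟩)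
    (v : ω.obj (X ⟨n+1, Nat.lt_succ_self (n+1)⟩)),
    face n ⟨n+1, Nat.lt_succ_self (n+1)⟩ (mk ω (n+1) X φ a v) =
      mk ω n (fun j => X ⟨j.1, Nat.lt_succ_of_lt j.2⟩) φ
        (fun j => a ⟨j.1, Nat.lt_succ_of_lt j.2⟩)
        (ω.map (a ⟨n, Nat.lt_succ_self n⟩) v))

/-- `split m n N h : CC ω N →ₗ CC ω m ⊗ CC ω n` (for `m + n = N`) is the family
of splitting maps `Δ_{m,n}` precisely when it satisfies the defining formula
`Δ_{m,n}(φ⊗a₁⊗⋯⊗a_N⊗v) = Σᵢ (φ⊗a₁⊗⋯⊗aₘ⊗eᵢ) ⊗ (eᵢ^∨⊗aₘ₊₁⊗⋯⊗a_N⊗v)` for every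
basis `(eᵢ)` of `ω(Xₘ)` (with dual basis `(eᵢ^∨)`); in particular the maps do
not depend on the choice of basis. -/
def IsSplit
    (split : ∀ (m n N : ℕ), m + n = N → (CC ω N →ₗ[k] (CC ω m ⊗[k] CC ω n))) : Prop :=
  ∀ (m n N : ℕ) (hmn : m + n = N) (X : Fin (N+1) → A)
    (φ : Module.Dual k (ω.obj (X ⟨0, Nat.succ_pos N⟩)))
    (a : ∀ i : Fin N, X ⟨i.1+1, Nat.succ_lt_succ i.2⟩ ⟶ X ⟨i.1, Nat.lt_succ_of_lt i.2⟩)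
    (v : ω.obj (X ⟨N, Nat.lt_succ_self N⟩))
    (ι : Type) (_ : Fintype ι) (b : Module.Basis ι k (ω.obj (X ⟨m, by omega⟩))),
    split m n N hmn (mk ω N X φ a v) =
      ∑ i : ι,
        (mk ω m (fun l => X ⟨l.1, by have := l.2; omega⟩) φ
          (fun l => a ⟨l.1, by have := l.2; omega⟩) (b i)) ⊗ₜ[k]
        (mk ω n (fun l => X ⟨m + l.1, by have := l.2; omega⟩) (b.coord i)
          (fun l => a ⟨m + l.1, by have := l.2; omega⟩)
          (ω.map (eqToHom (congrArg X (Fin.ext (by dsimp only; omega)))) v))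

/-- The total differential `d = Σᵢ (−1)ⁱ ∂ᵢ : CC_{N+1} → CC_N`. -/
def dTot (face : ∀ n : ℕ, Fin (n+2) → (CC ω (n+1) →ₗ[k] CC ω n)) (N : ℕ) :
    CC ω (N+1) →ₗ[k] CC ω N :=
  ∑ i : Fin (N+2), ((-1 : k) ^ (i : ℕ)) • face N i

/-- `star m : CC ω m → CC ω m → CC ω m` is the bilinear product `⋆` precisely
when it satisfies the defining formula on pure tensors:
`(φ⊗a₁⊗⋯⊗aₘ⊗v) ⋆ (φ'⊗a₁'⊗⋯⊗aₘ'⊗v') =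
  ((φ⊗φ')∘μ⁻¹) ⊗ (a₁⊠a₁') ⊗ ⋯ ⊗ (aₘ⊠aₘ') ⊗ μ(v⊗v')`. -/
def IsStar (star : ∀ m : ℕ, CC ω m →ₗ[k] CC ω m →ₗ[k] CC ω m) : Prop :=
  ∀ (m : ℕ) (X X' : Fin (m+1) → A)
    (φ : Module.Dual k (ω.obj (X ⟨0, Nat.succ_pos m⟩)))
    (φ' : Module.Dual k (ω.obj (X' ⟨0, Nat.succ_pos m⟩)))
    (a : ∀ i : Fin m, X ⟨i.1+1, Nat.succ_lt_succ i.2⟩ ⟶ X ⟨i.1, Nat.lt_succ_of_lt i.2⟩)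
    (a' : ∀ i : Fin m, X' ⟨i.1+1, Nat.succ_lt_succ i.2⟩ ⟶ X' ⟨i.1, Nat.lt_succ_of_lt i.2⟩)
    (v : ω.obj (X ⟨m, Nat.lt_succ_self m⟩)) (v' : ω.obj (X' ⟨m, Nat.lt_succ_self m⟩)),
    star m (mk ω m X φ a v) (mk ω m X' φ' a' v') =
      mk ω m (fun j => X j ⊗ X' j)
        ((TensorProduct.lid k k).toLinearMap ∘ₗ TensorProduct.map φ φ' ∘ₗ
          ((Functor.OplaxMonoidal.δ ω (X ⟨0, Nat.succ_pos m⟩) (X' ⟨0, Nat.succ_pos m⟩)).hom :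
            _ →ₗ[k] _))
        (fun i => MonoidalCategory.tensorHom (a i) (a' i))
        (Functor.LaxMonoidal.μ ω (X ⟨m, Nat.lt_succ_self m⟩) (X' ⟨m, Nat.lt_succ_self m⟩)
          (v ⊗ₜ[k] v'))

/-- The unit element `1ₘ = ū ⊗ id_𝟙 ⊗ ⋯ ⊗ id_𝟙 ⊗ u(1) ∈ CC ω m`. -/
def oneCC (m : ℕ) : CC ω m :=
  mk ω m (fun _ => 𝟙_ A) ((Functor.OplaxMonoidal.η ω).hom : ω.obj (𝟙_ A) →ₗ[k] k)
    (fun _ => 𝟙 (𝟙_ A)) (Functor.LaxMonoidal.ε ω (1 : k))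

/-- `degen n j : CC ω n →ₗ CC ω (n+1)` (for `j : Fin (n+1)`) is the family of
degeneracy maps `σⱼ` precisely when it satisfies the defining formula on pure
tensors: `σⱼ` inserts the identity morphism `id_{Xⱼ}` after `aⱼ`. -/
def IsDegeneracy (degen : ∀ n : ℕ, Fin (n+1) → (CC ω n →ₗ[k] CC ω (n+1))) : Prop :=
  ∀ (n : ℕ) (j : Fin (n+1)) (X : Fin (n+1) → A)
    (φ : Module.Dual k (ω.obj (X ⟨0, Nat.succ_pos n⟩)))
    (a : ∀ i : Fin n, X ⟨i.1+1, Nat.succ_lt_succ i.2⟩ ⟶ X ⟨i.1, Nat.lt_succ_of_lt i.2⟩)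
    (v : ω.obj (X ⟨n, Nat.lt_succ_self n⟩)),
    degen n j (mk ω n X φ a v) =
      mk ω (n+1)
        (fun l => if hl : l.1 ≤ j.1 then X ⟨l.1, by have := j.2; omega⟩
          else X ⟨l.1-1, by have := l.2; omega⟩)
        (φ ∘ₗ ModuleCat.Hom.hom (ω.map (eqToHom (by dsimp only; rw [dif_pos (Nat.zero_le j.1)]))))
        (fun i =>
          if h : i.1 < j.1 then
            castHom (by dsimp only; rw [dif_pos (by omega : i.1+1 ≤ j.1)])
              (by dsimp only; rw [dif_pos (by omega : i.1 ≤ j.1)])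
              (a ⟨i.1, by have := i.2; have := j.2; omega⟩)
          else if h2 : i.1 = j.1 then
            castHom (by dsimp only; rw [dif_neg (by omega : ¬ (i.1+1 ≤ j.1))]
                        exact congrArg X (Fin.ext (by dsimp only; omega)))
              (by dsimp only; rw [dif_pos (by omega : i.1 ≤ j.1)]
                  exact congrArg X (Fin.ext (by dsimp only; omega)))
              (𝟙 (X ⟨j.1, j.2⟩))
          else
            castHom (by dsimp only; rw [dif_neg (by omega : ¬ (i.1+1 ≤ j.1))]
                        exact congrArg X (Fin.ext (by dsimp only; omega)))
              (by dsimp only; rw [dif_neg (by omega : ¬ (i.1 ≤ j.1))])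
              (a ⟨i.1-1, by have := i.2; omega⟩))
        (ω.map (eqToHom (by dsimp only
                            rw [dif_neg (by have := j.2; omega : ¬ (n+1 ≤ j.1))]
                            exact congrArg X (Fin.ext (by dsimp only; omega)))) v)

end Tannaka

@[elab_as_elim]
lemma Fin.cases_zero_inner_last {m : ℕ} {P : Fin (m+2) → Prop} (zero : P ⟨0, Nat.succ_pos (m+1)⟩)
    (inner : ∀ p : Fin m, P ⟨p.1+1, Nat.succ_lt_succ (Nat.lt_succ_of_lt p.2)⟩)
    (last : P ⟨m+1, Nat.lt_succ_self (m+1)⟩) (i : Fin (m+2)) : P i := by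
  obtain ⟨_ | i, hi⟩ := i
  · exact zero
  · rcases Nat.lt_or_ge i m with h | h
    · exact inner ⟨i, h⟩
    · obtain rfl : i = m := by omega
      exact last

namespace Tannaka

section castHom

variable {A : Type} [SmallCategory A]

@[simp] lemma castHom_rfl {X Y : A} (h₁ : X = X) (h₂ : Y = Y) (f : X ⟶ Y) :
    castHom h₁ h₂ f = f := by
  simp [castHom]

lemma castHom_castHom {X X' X'' Y Y' Y'' : A} (h₁ : X = X') (h₂ : Y = Y')
    (h₃ : X' = X'') (h₄ : Y' = Y'') (f : X ⟶ Y) :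
    castHom h₃ h₄ (castHom h₁ h₂ f) = castHom (h₁.trans h₃) (h₂.trans h₄) f := by
  subst h₁ h₂ h₃ h₄; simp

lemma castHom_id {X Y : A} (h₁ h₂ : X = Y) : castHom h₁ h₂ (𝟙 X) = 𝟙 Y := by
  subst h₁; simp

lemma castHom_tensorHom [MonoidalCategory A] {X₁ Y₁ X₂ Y₂ X₁' Y₁' X₂' Y₂' : A}
    (h₁ : X₁ = X₁') (h₂ : Y₁ = Y₁') (h₃ : X₂ = X₂') (h₄ : Y₂ = Y₂')
    (f : X₁ ⟶ Y₁) (g : X₂ ⟶ Y₂) :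
    castHom h₁ h₂ f ⊗ₘ castHom h₃ h₄ g = castHom (by rw [h₁, h₃]) (by rw [h₂, h₄]) (f ⊗ₘ g) := by
  subst h₁ h₂ h₃ h₄; simp

end castHom

section Transport

variable {k : Type} [Field k] {A : Type} [SmallCategory A] (ω : A ⥤ ModuleCat k)

lemma map_eqToHom_apply_self {X : A} (h : X = X) (w : ω.obj X) :
    ω.map (eqToHom h) w = w := by
  simp

lemma map_eqToHom_map_eqToHom_apply {X Y Z : A} (h₁ : X = Y) (h₂ : Y = Z) (w : ω.obj X) :
    ω.map (eqToHom h₂) (ω.map (eqToHom h₁) w) = ω.map (eqToHom (h₁.trans h₂)) w := by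
  subst h₁ h₂; simp

end Transport

section MonoidalFunctor

variable {k : Type} [Field k] {A : Type} [SmallCategory A] [MonoidalCategory A]
  (ω : A ⥤ ModuleCat k) [ω.Monoidal]

lemma dualTensor_map_tensorHom {X Y X' Y' : A} (f : X ⟶ Y) (g : X' ⟶ Y')
    (φ : Module.Dual k (ω.obj Y)) (φ' : Module.Dual k (ω.obj Y')) :
    ((TensorProduct.lid k k).toLinearMap ∘ₗ TensorProduct.map φ φ' ∘ₗ
      (Functor.OplaxMonoidal.δ ω Y Y').hom) ∘ₗ (ω.map (f ⊗ₘ g)).hom =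
    (TensorProduct.lid k k).toLinearMap ∘ₗ
      TensorProduct.map (φ ∘ₗ (ω.map f).hom) (φ' ∘ₗ (ω.map g).hom) ∘ₗ
      (Functor.OplaxMonoidal.δ ω X X').hom := by
  have := congrArg ModuleCat.Hom.hom (Functor.OplaxMonoidal.δ_natural ω f g)
  simp only [ModuleCat.hom_comp, ModuleCat.hom_tensorHom] at this
  rw [LinearMap.comp_assoc, LinearMap.comp_assoc, ← this, TensorProduct.map_comp]
  rfl

lemma dualTensor_eqToHom {Z Z' W W' V : A} (h₁ : Z = W) (h₂ : Z' = W') (h : V = W ⊗ W')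
    (h' : Z ⊗ Z' = V) (φ : Module.Dual k (ω.obj W)) (φ' : Module.Dual k (ω.obj W'))
    (w : ω.obj (Z ⊗ Z')) :
    ((TensorProduct.lid k k).toLinearMap ∘ₗ TensorProduct.map φ φ' ∘ₗ
      (Functor.OplaxMonoidal.δ ω W W').hom) (ω.map (eqToHom h) (ω.map (eqToHom h') w)) =
    ((TensorProduct.lid k k).toLinearMap ∘ₗ
      TensorProduct.map (φ ∘ₗ (ω.map (eqToHom h₁)).hom) (φ' ∘ₗ (ω.map (eqToHom h₂)).hom) ∘ₗ
      (Functor.OplaxMonoidal.δ ω Z Z').hom) w := by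
  subst h₁ h₂ h
  simp only [eqToHom_refl, CategoryTheory.Functor.map_id]
  rfl

lemma map_eqToHom_μ_apply {Z Z' W W' V : A} (h₁ : Z = W) (h₂ : Z' = W') (h : Z ⊗ Z' = V)
    (h' : V = W ⊗ W') (v : ω.obj Z) (v' : ω.obj Z') :
    ω.map (eqToHom h') (ω.map (eqToHom h) (Functor.LaxMonoidal.μ ω Z Z' (v ⊗ₜ v'))) =
      Functor.LaxMonoidal.μ ω W W' (ω.map (eqToHom h₁) v ⊗ₜ ω.map (eqToHom h₂) v') := by
  subst h₁ h₂ h'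
  simp only [map_eqToHom_apply_self]

lemma map_tensorHom_μ_apply {X Y X' Y' : A} (f : X ⟶ Y) (g : X' ⟶ Y') (v : ω.obj X)
    (v' : ω.obj X') :
    ω.map (f ⊗ₘ g) (Functor.LaxMonoidal.μ ω X X' (v ⊗ₜ v')) =
      Functor.LaxMonoidal.μ ω Y Y' (ω.map f v ⊗ₜ ω.map g v') :=
  (ConcreteCategory.congr_hom (Functor.LaxMonoidal.μ_natural ω f g) (v ⊗ₜ v')).symm

end MonoidalFunctor

section PureTensor

variable {k : Type} [Field k] {A : Type} [SmallCategory A] [DecidableEq A] [Preadditive A]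
  [CategoryTheory.Linear k A] (ω : A ⥤ ModuleCat k)

lemma CC.linearMap_ext {M : Type} [AddCommMonoid M] [Module k M] {n : ℕ}
    {f g : CC ω n →ₗ[k] M}
    (h : ∀ X φ a v, f (mk ω n X φ a v) = g (mk ω n X φ a v)) : f = g := by
  ext X φ a v
  exact h X φ a v

lemma CC.bilinear_ext {M : Type} [AddCommMonoid M] [Module k M] {m n : ℕ}
    {f g : CC ω m →ₗ[k] CC ω n →ₗ[k] M}
    (h : ∀ X φ a v X' φ' a' v',
      f (mk ω m X φ a v) (mk ω n X' φ' a' v') = g (mk ω m X φ a v) (mk ω n X' φ' a' v')) :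
    f = g :=
  CC.linearMap_ext ω fun X φ a v => CC.linearMap_ext ω fun X' φ' a' v' => h X φ a v X' φ' a' v'

lemma map_mul_of_map_mul_mk {m n : ℕ} (F : CC ω m →ₗ[k] CC ω n)
    (mulₘ : CC ω m →ₗ[k] CC ω m →ₗ[k] CC ω m) (mulₙ : CC ω n →ₗ[k] CC ω n →ₗ[k] CC ω n)
    (h : ∀ X φ a v X' φ' a' v',
      F (mulₘ (mk ω m X φ a v) (mk ω m X' φ' a' v')) =
        mulₙ (F (mk ω m X φ a v)) (F (mk ω m X' φ' a' v')))
    (x y : CC ω m) : F (mulₘ x y) = mulₙ (F x) (F y) :=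
  LinearMap.congr_fun₂ (f := mulₘ.compr₂ F) (g := mulₙ.compl₁₂ F F) (CC.bilinear_ext ω h) x y

lemma mk_eq_mk (n : ℕ) {Y₁ Y₂ : Fin (n+1) → A} (h : Y₁ = Y₂)
    (φ₁ : Module.Dual k (ω.obj (Y₁ ⟨0, Nat.succ_pos n⟩)))
    (φ₂ : Module.Dual k (ω.obj (Y₂ ⟨0, Nat.succ_pos n⟩)))
    (a₁ : ∀ i : Fin n, Y₁ ⟨i.1+1, Nat.succ_lt_succ i.2⟩ ⟶ Y₁ ⟨i.1, Nat.lt_succ_of_lt i.2⟩)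
    (a₂ : ∀ i : Fin n, Y₂ ⟨i.1+1, Nat.succ_lt_succ i.2⟩ ⟶ Y₂ ⟨i.1, Nat.lt_succ_of_lt i.2⟩)
    (v₁ : ω.obj (Y₁ ⟨n, Nat.lt_succ_self n⟩)) (v₂ : ω.obj (Y₂ ⟨n, Nat.lt_succ_self n⟩))
    (hφ : ∀ w, φ₁ (ω.map (eqToHom (congrFun h ⟨0, Nat.succ_pos n⟩).symm) w) = φ₂ w)
    (ha : ∀ i, a₂ i = castHom (congrFun h _) (congrFun h _) (a₁ i))
    (hv : v₂ = ω.map (eqToHom (congrFun h ⟨n, Nat.lt_succ_self n⟩)) v₁) :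
    mk ω n Y₁ φ₁ a₁ v₁ = mk ω n Y₂ φ₂ a₂ v₂ := by
  subst h
  obtain rfl : φ₁ = φ₂ := LinearMap.ext fun w => by rw [← hφ w, map_eqToHom_apply_self]
  obtain rfl : a₁ = a₂ := funext fun i => by simpa using (ha i).symm
  simp_all

end PureTensor

section Simplicial

variable {k : Type} [Field k] {A : Type} [SmallCategory A] [DecidableEq A] [Preadditive A]
  [CategoryTheory.Linear k A] [MonoidalCategory A] (ω : A ⥤ ModuleCat k) [ω.Monoidal]

lemma face_star_mk {face : ∀ n : ℕ, Fin (n+2) → (CC ω (n+1) →ₗ[k] CC ω n)} (hface : IsFace ω face)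
    {star : ∀ m : ℕ, CC ω m →ₗ[k] CC ω m →ₗ[k] CC ω m} (hstar : IsStar ω star)
    (m : ℕ) (i : Fin (m+2)) (X : Fin (m+2) → A) φ a v (X' : Fin (m+2) → A) φ' a' v' :
    face m i (star (m+1) (mk ω (m+1) X φ a v) (mk ω (m+1) X' φ' a' v')) =
      star m (face m i (mk ω (m+1) X φ a v)) (face m i (mk ω (m+1) X' φ' a' v')) := by
  obtain ⟨hface0, hfaceInner, hfaceLast⟩ := hface
  rw [hstar]
  induction i using Fin.cases_zero_inner_last with
  | zero =>
    rw [hface0 m (fun j => X j ⊗ X' j), hface0 m X, hface0 m X', hstar]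
    refine mk_eq_mk ω m rfl _ _ _ _ _ _ (fun w => ?_) (fun j => (castHom_rfl _ _ _).symm) ?_
    · rw [map_eqToHom_apply_self]
      exact LinearMap.congr_fun (dualTensor_map_tensorHom ω _ _ φ φ') w
    · rw [map_eqToHom_apply_self]
  | inner p =>
    rw [hfaceInner m p (fun j => X j ⊗ X' j), hfaceInner m p X, hfaceInner m p X', hstar]
    refine mk_eq_mk ω m (funext fun l => ?_) _ _ _ _ _ _ (fun w => ?_) (fun j => ?_) ?_
    · split_ifs <;> rfl
    · exact dualTensor_eqToHom ω _ _ _ _ φ φ' w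
    · rcases Nat.lt_trichotomy j.1 p.1 with h | h | h
      · simp only [dif_pos h, castHom_tensorHom, castHom_castHom]
      · simp only [dif_neg (by omega : ¬ j.1 < p.1), dif_pos h, castHom_tensorHom,
          castHom_castHom, tensorHom_comp_tensorHom]
      · simp only [dif_neg h.not_gt, dif_neg h.ne', castHom_tensorHom, castHom_castHom]
    · exact (map_eqToHom_μ_apply ω _ _ _ _ v v').symm
  | last =>
    rw [hfaceLast m (fun j => X j ⊗ X' j), hfaceLast m X, hfaceLast m X', hstar]
    refine mk_eq_mk ω m rfl _ _ _ _ _ _ (fun w => ?_) (fun j => (castHom_rfl _ _ _).symm) ?_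
    · rw [map_eqToHom_apply_self]
    · rw [map_eqToHom_apply_self, map_tensorHom_μ_apply]

lemma degen_star_mk {degen : ∀ n : ℕ, Fin (n+1) → (CC ω n →ₗ[k] CC ω (n+1))}
    (hdegen : IsDegeneracy ω degen)
    {star : ∀ m : ℕ, CC ω m →ₗ[k] CC ω m →ₗ[k] CC ω m} (hstar : IsStar ω star)
    (m : ℕ) (j : Fin (m+1)) (X : Fin (m+1) → A) φ a v (X' : Fin (m+1) → A) φ' a' v' :
    degen m j (star m (mk ω m X φ a v) (mk ω m X' φ' a' v')) =
      star (m+1) (degen m j (mk ω m X φ a v)) (degen m j (mk ω m X' φ' a' v')) := by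
  rw [hstar, hdegen m j (fun l => X l ⊗ X' l), hdegen m j X, hdegen m j X', hstar]
  refine mk_eq_mk ω (m+1) (funext fun l => ?_) _ _ _ _ _ _ (fun w => ?_) (fun i => ?_) ?_
  · split_ifs <;> rfl
  · exact dualTensor_eqToHom ω _ _ _ _ φ φ' w
  · rcases Nat.lt_trichotomy i.1 j.1 with h | h | h
    · simp only [dif_pos h, castHom_tensorHom, castHom_castHom]
    · simp only [dif_neg (by omega : ¬ i.1 < j.1), dif_pos h, castHom_tensorHom,
        castHom_castHom, id_tensorHom_id]
    · simp only [dif_neg h.not_gt, dif_neg h.ne', castHom_tensorHom, castHom_castHom]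
  · exact (map_eqToHom_μ_apply ω _ _ _ _ v v').symm

lemma face_oneCC {face : ∀ n : ℕ, Fin (n+2) → (CC ω (n+1) →ₗ[k] CC ω n)} (hface : IsFace ω face)
    (m : ℕ) (i : Fin (m+2)) : face m i (oneCC ω (m+1)) = oneCC ω m := by
  obtain ⟨hface0, hfaceInner, hfaceLast⟩ := hface
  unfold oneCC
  induction i using Fin.cases_zero_inner_last with
  | zero =>
    rw [hface0 m (fun _ => 𝟙_ A)]
    refine mk_eq_mk ω m rfl _ _ _ _ _ _ (fun w => ?_) (fun j => (castHom_rfl _ _ _).symm) ?_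
    · simp
    · rw [map_eqToHom_apply_self]
  | inner p =>
    rw [hfaceInner m p (fun _ => 𝟙_ A)]
    refine mk_eq_mk ω m (funext fun l => ?_) _ _ _ _ _ _ (fun w => ?_) (fun j => ?_) ?_
    · split_ifs <;> rfl
    · rw [LinearMap.comp_apply, map_eqToHom_map_eqToHom_apply, map_eqToHom_apply_self]
    · rcases Nat.lt_trichotomy j.1 p.1 with h | h | h
      · simp only [dif_pos h, castHom_castHom, castHom_id]
      · simp only [dif_neg (by omega : ¬ j.1 < p.1), dif_pos h, Category.id_comp,
          castHom_castHom, castHom_id]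
      · simp only [dif_neg h.not_gt, dif_neg h.ne', castHom_castHom, castHom_id]
    · rw [map_eqToHom_map_eqToHom_apply, map_eqToHom_apply_self]
  | last =>
    rw [hfaceLast m (fun _ => 𝟙_ A)]
    refine mk_eq_mk ω m rfl _ _ _ _ _ _ (fun w => ?_) (fun j => (castHom_rfl _ _ _).symm) ?_
    · rw [map_eqToHom_apply_self]
    · simp

lemma degen_oneCC {degen : ∀ n : ℕ, Fin (n+1) → (CC ω n →ₗ[k] CC ω (n+1))}
    (hdegen : IsDegeneracy ω degen) (m : ℕ) (j : Fin (m+1)) :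
    degen m j (oneCC ω m) = oneCC ω (m+1) := by
  unfold oneCC
  rw [hdegen m j (fun _ => 𝟙_ A)]
  refine mk_eq_mk ω (m+1) (funext fun l => ?_) _ _ _ _ _ _ (fun w => ?_) (fun i => ?_) ?_
  · split_ifs <;> rfl
  · rw [LinearMap.comp_apply, map_eqToHom_map_eqToHom_apply, map_eqToHom_apply_self]
  · rcases Nat.lt_trichotomy i.1 j.1 with h | h | h
    · simp only [dif_pos h, castHom_castHom, castHom_id]
    · simp only [dif_neg (by omega : ¬ i.1 < j.1), dif_pos h, castHom_castHom, castHom_id]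
    · simp only [dif_neg h.not_gt, dif_neg h.ne', castHom_castHom, castHom_id]
  · rw [map_eqToHom_map_eqToHom_apply, map_eqToHom_apply_self]

end Simplicial

variable {k : Type} [Field k] {A : Type} [SmallCategory A] [DecidableEq A]
  [Preadditive A] [CategoryTheory.Linear k A]
  [MonoidalCategory A] [MonoidalPreadditive A] [MonoidalLinear k A]
variable (ω : A ⥤ ModuleCat k) [ω.Additive] [Functor.Linear k ω] [ω.Monoidal]

theorem star_simplicial_compatibility
    [∀ X : A, FiniteDimensional k (ω.obj X)]
    (face : ∀ n : ℕ, Fin (n+2) → (CC ω (n+1) →ₗ[k] CC ω n)) (hface : IsFace ω face)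
    (degen : ∀ n : ℕ, Fin (n+1) → (CC ω n →ₗ[k] CC ω (n+1))) (hdegen : IsDegeneracy ω degen)
    (star : ∀ m : ℕ, CC ω m →ₗ[k] CC ω m →ₗ[k] CC ω m) (hstar : IsStar ω star) :
    -- the face maps are multiplicative for ⋆
    (∀ (m : ℕ) (i : Fin (m+2)) (x y : CC ω (m+1)),
      face m i (star (m+1) x y) = star m (face m i x) (face m i y)) ∧
    -- the degeneracy maps are multiplicative for ⋆
    (∀ (m : ℕ) (j : Fin (m+1)) (x y : CC ω m),
      degen m j (star m x y) = star (m+1) (degen m j x) (degen m j y)) ∧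
    -- the unit elements are compatible with the simplicial structure
    (∀ (m : ℕ) (i : Fin (m+2)), face m i (oneCC ω (m+1)) = oneCC ω m) ∧
    (∀ (m : ℕ) (j : Fin (m+1)), degen m j (oneCC ω m) = oneCC ω (m+1)) := by
  refine ⟨fun m i => map_mul_of_map_mul_mk ω _ _ _ (face_star_mk ω hface hstar m i),
    fun m j => map_mul_of_map_mul_mk ω _ _ _ (degen_star_mk ω hdegen hstar m j),
    face_oneCC ω hface, degen_oneCC ω hdegen⟩

end Tannaka
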